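/- For stack-heap models in separation logic with the precise semantics given, if (s,h) satisfies the separating conjunction ψ1 ∗ ψ2, and F1, F2 are supersets of the footprint sets FP_{(s,h)}(ψ1) and FP_{(s,h)}(ψ2) respectively, then there exist F1 ∈ 𝓕1 and F2 ∈ 𝓕2 with F1 ∩ F2 = ∅, F1 ∪ F2 = dom(h), (s, h|_{F1}) ⊨ ψ1, and (s, h|_{F2}) ⊨ ψ2. Conversely, the existence of such F1, F2 implies (s,h) ⊨ ψ1 ∗ ψ2. -/

import Mathlib

section

variable {Loc Val : Type*}

/-- Domain of a heap. -/
def hdom (h : Loc → Option Val) : Set Loc := {l | h l ≠ none}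

/-- Disjointness of heaps (disjoint domains). -/
def HDisj (h1 h2 : Loc → Option Val) : Prop := Disjoint (hdom h1) (hdom h2)

/-- Disjoint union of heaps (left-biased union, used under disjointness). -/
def hunion (h1 h2 : Loc → Option Val) : Loc → Option Val :=
  fun l => (h1 l).orElse (fun _ => h2 l)

open Classical in
/-- Restriction of a heap to a set of locations. -/
noncomputable def hrestrict (h : Loc → Option Val) (F : Set Loc) : Loc → Option Val :=
  fun l => if l ∈ F then h l else none

/-- Semantics of separating conjunction (for a fixed stack, a formula is just a
predicate on heaps). -/
def SepStar (P1 P2 : (Loc → Option Val) → Prop) (h : Loc → Option Val) : Prop :=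
  ∃ h1 h2, HDisj h1 h2 ∧ h = hunion h1 h2 ∧ P1 h1 ∧ P2 h2

/-- Footprints of a formula `P` in the model with heap `h`. -/
def FP (P : (Loc → Option Val) → Prop) (h : Loc → Option Val) : Set (Set Loc) :=
  {F | F ⊆ hdom h ∧ P (hrestrict h F)}

lemma hdom_hunion (h1 h2 : Loc → Option Val) : hdom (hunion h1 h2) = hdom h1 ∪ hdom h2 := by
  ext l
  simp only [hdom, hunion, Set.mem_ofPred_eq, Set.mem_union]
  cases h1 l <;> simp

lemma hdom_hrestrict (h : Loc → Option Val) (F : Set Loc) : hdom (hrestrict h F) = F ∩ hdom h := by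
  ext l
  by_cases hl : l ∈ F <;> simp [hdom, hrestrict, hl]

lemma hrestrict_hunion_hdom_left (h1 h2 : Loc → Option Val) :
    hrestrict (hunion h1 h2) (hdom h1) = h1 := by
  funext l
  cases hv : h1 l <;> simp [hrestrict, hdom, hunion, hv]

lemma hrestrict_hunion_hdom_right {h1 h2 : Loc → Option Val} (hd : HDisj h1 h2) :
    hrestrict (hunion h1 h2) (hdom h2) = h2 := by
  funext l
  have hdisj : h1 l = none ∨ h2 l = none := by
    by_contra! hl
    exact Set.disjoint_left.mp hd hl.1 hl.2
  rcases hdisj with h1l | h2l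
  · cases hv : h2 l <;> simp [hrestrict, hdom, hunion, h1l, hv]
  · simp [hrestrict, hdom, h2l]

lemma hDisj_hrestrict (h : Loc → Option Val) {F1 F2 : Set Loc} (hF : Disjoint F1 F2) :
    HDisj (hrestrict h F1) (hrestrict h F2) := by
  rw [HDisj, hdom_hrestrict, hdom_hrestrict]
  exact hF.mono Set.inter_subset_left Set.inter_subset_left

lemma hunion_hrestrict {h : Loc → Option Val} {F1 F2 : Set Loc} (hF : hdom h ⊆ F1 ∪ F2) :
    hunion (hrestrict h F1) (hrestrict h F2) = h := by
  funext l
  by_cases h1 : l ∈ F1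
  · cases hv : h l <;> simp [hunion, hrestrict, h1, hv]
  by_cases h2 : l ∈ F2
  · simp [hunion, hrestrict, h1, h2]
  have hl : h l = none := by
    by_contra hl
    simpa [h1, h2] using hF hl
  simp [hunion, hrestrict, h1, h2, hl]

lemma sepStar_iff_exists_partition (P1 P2 : (Loc → Option Val) → Prop) (h : Loc → Option Val) :
    SepStar P1 P2 h ↔ ∃ F1 F2 : Set Loc, F1 ∩ F2 = ∅ ∧ F1 ∪ F2 = hdom h ∧
      P1 (hrestrict h F1) ∧ P2 (hrestrict h F2) := by
  constructor
  · rintro ⟨h1, h2, hd, rfl, hp1, hp2⟩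
    refine ⟨hdom h1, hdom h2, Set.disjoint_iff_inter_eq_empty.mp hd, (hdom_hunion h1 h2).symm,
      ?_, ?_⟩
    · rwa [hrestrict_hunion_hdom_left]
    · rwa [hrestrict_hunion_hdom_right hd]
  · rintro ⟨F1, F2, hinter, hunion_eq, hp1, hp2⟩
    exact ⟨_, _, hDisj_hrestrict h (Set.disjoint_iff_inter_eq_empty.mpr hinter),
      (hunion_hrestrict hunion_eq.ge).symm, hp1, hp2⟩

/-- Separating conjunction can be checked on any supersets of the footprint
sets of its operands. -/
theorem stmt3 (P1 P2 : (Loc → Option Val) → Prop) (h : Loc → Option Val)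
    (F1s F2s : Set (Set Loc)) (hF1 : FP P1 h ⊆ F1s) (hF2 : FP P2 h ⊆ F2s) :
    SepStar P1 P2 h ↔
      ∃ F1 ∈ F1s, ∃ F2 ∈ F2s, F1 ∩ F2 = ∅ ∧ F1 ∪ F2 = hdom h ∧
        P1 (hrestrict h F1) ∧ P2 (hrestrict h F2) := by
  rw [sepStar_iff_exists_partition]
  constructor
  · rintro ⟨F1, F2, hinter, hunion_eq, hp1, hp2⟩
    have hsub1 : F1 ⊆ hdom h := hunion_eq ▸ Set.subset_union_left
    have hsub2 : F2 ⊆ hdom h := hunion_eq ▸ Set.subset_union_right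
    exact ⟨F1, hF1 ⟨hsub1, hp1⟩, F2, hF2 ⟨hsub2, hp2⟩, hinter, hunion_eq, hp1, hp2⟩
  · rintro ⟨F1, -, F2, -, hpart⟩
    exact ⟨F1, F2, hpart⟩

end
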